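/- (Filipów–Mrożek–Recław–Szuca; ideal Arzelà–Ascoli theorem) Let I be an ideal on ℕ containing all finite sets. Then: (a) I is BW if and only if for every uniformly bounded and equicontinuous sequence (fₙ) of continuous real-valued functions on [0,1] there exists A ∈ I⁺ such that, with A = {n₀ < n₁ < ⋯}, the sequence (f_{n_k})_k is uniformly I-convergent; (b) I is FinBW if and only if for every uniformly bounded and equicontinuous sequence (fₙ) of continuous real-valued functions on [0,1] there exists A ∈ I⁺ such that (fₙ)_{n∈A} is uniformly convergent. -/

import Mathlib

open Set Filter Topology

def IsIdeal {X : Type*} (I : Set (Set X)) : Prop :=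
  ∅ ∈ I ∧ (Set.univ : Set X) ∉ I ∧ (∀ A B : Set X, A ∈ I → B ∈ I → A ∪ B ∈ I) ∧
    ∀ A B : Set X, A ⊆ B → B ∈ I → A ∈ I

def ContainsFin {X : Type*} (I : Set (Set X)) : Prop := ∀ A : Set X, A.Finite → A ∈ I

/-- The increasing enumeration of a subset of `ℕ` (`n₀ < n₁ < ⋯`). -/
noncomputable def en (A : Set ℕ) : ℕ → ℕ := Nat.nth (· ∈ A)

/-- `I` is BW: every bounded real sequence has an `I`-positive set `A` such that
the subsequence indexed by the increasing enumeration of `A` is `I`-convergent. -/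
def BW (I : Set (Set ℕ)) : Prop :=
  ∀ x : ℕ → ℝ, (∃ M : ℝ, ∀ n, |x n| ≤ M) →
    ∃ A : Set ℕ, A ∉ I ∧ ∃ l : ℝ, ∀ ε > (0 : ℝ), {k : ℕ | ε ≤ |x (en A k) - l|} ∈ I

/-- `I` is FinBW. -/
def FinBW (I : Set (Set ℕ)) : Prop :=
  ∀ x : ℕ → ℝ, (∃ M : ℝ, ∀ n, |x n| ≤ M) →
    ∃ A : Set ℕ, A ∉ I ∧ ∃ l : ℝ, Tendsto (fun k => x (en A k)) atTop (nhds l)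

/-- Continuous real-valued functions on `[0,1]`, with the supremum metric. -/
abbrev C01 := C(↥(Set.Icc (0 : ℝ) 1), ℝ)

def UnifBounded (f : ℕ → C01) : Prop := ∃ M : ℝ, ∀ n x, |f n x| ≤ M

def Equicont (f : ℕ → C01) : Prop :=
  ∀ ε > (0 : ℝ), ∃ δ > (0 : ℝ), ∀ n (x y : ↥(Set.Icc (0 : ℝ) 1)),
    dist x y < δ → dist (f n x) (f n y) < ε

/-!
By Arzelà–Ascoli, a uniformly bounded equicontinuous sequence in `C[0,1]` lies in a compact
metric space, and every nonempty compact metric space is a continuous image of the Cantor set,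
a closed subset of `[0,1]`. Lift the sequence to points of the Cantor set and apply the real
hypothesis there: since the Cantor set is closed, the limit of the chosen subsequence stays in
it, and continuity pushes the convergence back to `C[0,1]`. Both forms of convergence
(`I`-convergence and ordinary convergence) are convergence along a filter on `ℕ`, so one
argument serves both parts. Conversely, constant functions reduce the real case to the
functional one.
-/

namespace IsIdeal

variable {X : Type*} {I : Set (Set X)}

def dualFilter (hI : IsIdeal I) : Filter X :=
  Filter.comk (· ∈ I) hI.1 (fun t ht s hs => hI.2.2.2 s t hs ht)
    (fun s hs t ht => hI.2.2.1 s t hs ht)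

theorem mem_dualFilter (hI : IsIdeal I) {s : Set X} : s ∈ hI.dualFilter ↔ sᶜ ∈ I :=
  Filter.mem_comk

instance dualFilter_neBot (hI : IsIdeal I) : hI.dualFilter.NeBot :=
  ⟨fun h => hI.2.1 <| by
    simpa using hI.mem_dualFilter.1 (h ▸ Filter.mem_bot : (∅ : Set X) ∈ hI.dualFilter)⟩

theorem tendsto_dualFilter_iff {α : Type*} [PseudoMetricSpace α] (hI : IsIdeal I)
    {u : X → α} {a : α} :
    Tendsto u hI.dualFilter (𝓝 a) ↔ ∀ ε > 0, {k | ε ≤ dist (u k) a} ∈ I := by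
  simp only [Metric.tendsto_nhds, Filter.Eventually, hI.mem_dualFilter, compl_ofPred, not_lt]

end IsIdeal

def HasTendstoSubseq {X : Type*} [TopologicalSpace X] (I : Set (Set ℕ)) (L : Filter ℕ)
    (x : ℕ → X) : Prop :=
  ∃ A : Set ℕ, A ∉ I ∧ ∃ a : X, Tendsto (x ∘ en A) L (𝓝 a)

namespace HasTendstoSubseq

variable {X Y : Type*} [TopologicalSpace X] [TopologicalSpace Y] {I : Set (Set ℕ)}
  {L : Filter ℕ}

theorem comp {g : X → Y} (hg : Continuous g) {x : ℕ → X} (hx : HasTendstoSubseq I L x) :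
    HasTendstoSubseq I L (g ∘ x) :=
  let ⟨A, hA, a, ha⟩ := hx
  ⟨A, hA, g a, (hg.tendsto a).comp ha⟩

theorem of_surjective {g : X → Y} (hg : Continuous g) (hsurj : Function.Surjective g)
    (h : ∀ x : ℕ → X, HasTendstoSubseq I L x) (y : ℕ → Y) : HasTendstoSubseq I L y := by
  choose x hx using fun n => hsurj (y n)
  simpa [Function.comp_def, hx] using (h x).comp hg

theorem of_cantorSet [L.NeBot]
    (hreal : ∀ y : ℕ → ℝ, (∀ n, y n ∈ Icc 0 1) → HasTendstoSubseq I L y)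
    (x : ℕ → cantorSet) : HasTendstoSubseq I L x := by
  obtain ⟨A, hA, a, ha⟩ := hreal (fun n => x n) fun n => cantorSet_subset_unitInterval (x n).2
  have hmem : a ∈ cantorSet :=
    isClosed_cantorSet.mem_of_tendsto ha (Eventually.of_forall fun k => (x (en A k)).2)
  exact ⟨A, hA, ⟨a, hmem⟩, tendsto_subtype_rng.2 ha⟩

theorem of_isCompact {Z : Type*} [MetricSpace Z] [L.NeBot]
    (hreal : ∀ y : ℕ → ℝ, (∀ n, y n ∈ Icc 0 1) → HasTendstoSubseq I L y)
    {K : Set Z} (hK : IsCompact K) {x : ℕ → Z} (hx : ∀ n, x n ∈ K) :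
    HasTendstoSubseq I L x := by
  have : CompactSpace K := isCompact_iff_compactSpace.1 hK
  have : Nonempty K := ⟨⟨x 0, hx 0⟩⟩
  obtain ⟨g, hg, hsurj⟩ := exists_nat_bool_continuous_surjective_of_compact K
  have hlift := of_surjective (hg.comp cantorSetHomeomorphNatToBool.continuous)
    (hsurj.comp cantorSetHomeomorphNatToBool.surjective) (of_cantorSet hreal)
    (fun n => ⟨x n, hx n⟩)
  exact hlift.comp continuous_subtype_val

end HasTendstoSubseq

theorem isCompact_closure_range_of_unifBounded_of_equicont {f : ℕ → C01}
    (hb : UnifBounded f) (he : Equicont f) : IsCompact (closure (range f)) := by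
  let e := ContinuousMap.isometryEquivBoundedOfCompact (Icc (0 : ℝ) 1) ℝ
  obtain ⟨M, hM⟩ := hb
  have hbounded : IsCompact (closure (range (e ∘ f))) := by
    refine BoundedContinuousFunction.arzela_ascoli (Metric.closedBall 0 M)
      (isCompact_closedBall 0 M)
      _ ?_ (Metric.uniformEquicontinuous_iff.2 fun ε hε => ?_).equicontinuous
    · rintro _ x ⟨n, rfl⟩
      simpa [e] using hM n x
    · obtain ⟨δ, hδ, h⟩ := he ε hε
      exact ⟨δ, hδ, fun x y hxy ⟨_, n, rfl⟩ => h n x y hxy⟩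
  have hpre : e ⁻¹' range (e ∘ f) = range f := by
    rw [range_comp, e.injective.preimage_image]
  have hcompact := e.toHomeomorph.isCompact_preimage.2 hbounded
  rwa [e.toHomeomorph.preimage_closure, IsometryEquiv.coe_toHomeomorph, hpre] at hcompact

theorem forall_hasTendstoSubseq_real_iff_forall_equicont (I : Set (Set ℕ)) (L : Filter ℕ)
    [L.NeBot] :
    (∀ x : ℕ → ℝ, (∃ M : ℝ, ∀ n, |x n| ≤ M) → HasTendstoSubseq I L x) ↔
      ∀ f : ℕ → C01, UnifBounded f → Equicont f → HasTendstoSubseq I L f := by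
  constructor
  · intro h f hb he
    refine HasTendstoSubseq.of_isCompact (fun y hy => h y ⟨1, fun n => ?_⟩)
      (isCompact_closure_range_of_unifBounded_of_equicont hb he)
      fun n => subset_closure (mem_range_self n)
    exact abs_le.2 ⟨by linarith [(hy n).1], (hy n).2⟩
  · rintro h x ⟨M, hM⟩
    have hconst := h (fun n => ContinuousMap.const _ (x n)) ⟨M, fun n _ => hM n⟩
      fun ε hε => ⟨1, one_pos, fun n a b _ => by simpa using hε⟩
    exact hconst.comp (continuous_eval_const (⟨0, left_mem_Icc.2 zero_le_one⟩ : Icc (0 : ℝ) 1))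

theorem ideal_arzela_ascoli_general (I : Set (Set ℕ)) (hI : IsIdeal I) :
    (BW I ↔ ∀ f : ℕ → C01, UnifBounded f → Equicont f →
      ∃ A : Set ℕ, A ∉ I ∧ ∃ g : C01, ∀ ε > (0 : ℝ),
        {k : ℕ | ε ≤ dist (f (en A k)) g} ∈ I) ∧
    (FinBW I ↔ ∀ f : ℕ → C01, UnifBounded f → Equicont f →
      ∃ A : Set ℕ, A ∉ I ∧ ∃ g : C01,
        Tendsto (fun k => f (en A k)) atTop (nhds g)) := by
  refine ⟨?_, forall_hasTendstoSubseq_real_iff_forall_equicont I atTop⟩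
  simpa only [BW, HasTendstoSubseq, hI.tendsto_dualFilter_iff, Function.comp_apply, Real.dist_eq]
    using forall_hasTendstoSubseq_real_iff_forall_equicont I hI.dualFilter

/-- Ideal version of the Arzelà–Ascoli theorem (Filipów–Mrożek–Recław–Szuca):
(a) `I` is BW iff every uniformly bounded equicontinuous sequence in `C[0,1]`
has a uniformly `I`-convergent subsequence indexed by an `I`-positive set;
(b) `I` is FinBW iff every such sequence has a uniformly convergent subsequence
indexed by an `I`-positive set. -/
theorem ideal_arzela_ascoli (I : Set (Set ℕ)) (hI : IsIdeal I) (hfin : ContainsFin I) :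
    (BW I ↔ ∀ f : ℕ → C01, UnifBounded f → Equicont f →
      ∃ A : Set ℕ, A ∉ I ∧ ∃ g : C01, ∀ ε > (0 : ℝ),
        {k : ℕ | ε ≤ dist (f (en A k)) g} ∈ I) ∧
    (FinBW I ↔ ∀ f : ℕ → C01, UnifBounded f → Equicont f →
      ∃ A : Set ℕ, A ∉ I ∧ ∃ g : C01,
        Tendsto (fun k => f (en A k)) atTop (nhds g)) :=
  ideal_arzela_ascoli_general I hI
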